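/- Assume the drift condition: there exist a measurable V : X → [1,∞), a measurable set C ⊆ X, constants b, c > 0 and 0 < α ≤ 1 such that P_θV ≤ V − c V^{1−α} + b·1_C for every θ ∈ Θ. Let π be a probability measure on X, 0 ≤ β ≤ 1 − α, and f a measurable function with sup_X |f|/V^β < ∞ and π(|f|) < ∞; set f̄ := f − π(f). For 0 < a < 1 and l ≥ 0 define ĝ_a^{(l)}(x,θ) := Σ_{j ≥ 0} (1−a)^{j+1} E^{(l)}_{x,θ}[f̄(X_j)]. Then the series defining ĝ_a^{(l)}(x,θ) converges absolutely for every (x,θ), l and 0 < a < 1, and f̄(x) = (1−a)^{-1} ĝ_a^{(l)}(x,θ) − E^{(l)}_{x,θ}[ ĝ_a^{(l+1)}(X_1, θ_1) ]. -/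

import Mathlib

open MeasureTheory ProbabilityTheory Filter Set
open scoped ENNReal NNReal Classical

noncomputable section

namespace AdaptiveMCMC

variable {X Θ : Type*} [MeasurableSpace X] [MeasurableSpace Θ]

/-- The `W`-weighted norm distance between two measures:
`‖μ − ν‖_W = sup { |μ(g) − ν(g)| : g measurable, |g| ≤ W }`. -/
def wDist (W : X → ℝ) (μ ν : Measure X) : ℝ :=
  ⨆ g : {g : X → ℝ // Measurable g ∧ ∀ x, |g x| ≤ W x},
    |(∫ x, g.1 x ∂μ) - ∫ x, g.1 x ∂ν|

/-- Total variation distance `‖μ − ν‖_TV = sup { |μ(f) − ν(f)| : |f| ≤ 1 }`. -/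
def tvDist (μ ν : Measure X) : ℝ := wDist (fun _ => 1) μ ν

/-- `D(θ,θ') = sup_x ‖P_θ(x,·) − P_θ'(x,·)‖_TV`. -/
def Dtv (P : Θ → Kernel X X) (θ θ' : Θ) : ℝ := ⨆ x : X, tvDist (P θ x) (P θ' x)

/-- Iterates `P^n` of a kernel. -/
def kpow (P : Kernel X X) : ℕ → Kernel X X
  | 0 => Kernel.id
  | n + 1 => (kpow P n) ∘ₖ P

/-- Prepend a state to a path. -/
def prepend {α : Type*} (z : α) (ω : ℕ → α) : ℕ → α
  | 0 => z
  | n + 1 => ω n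

/-- `law l (x,θ)` is the law `P^{(l)}_{x,θ}` of the canonical nonhomogeneous Markov chain
`{Z_n = (X_n, θ_n)}` started at `(x,θ)` whose `n`-th transition kernel is `P̄(l+n)`. -/
structure IsAdaptiveLaw (Pbar : ℕ → Kernel (X × Θ) (X × Θ))
    (law : ℕ → X × Θ → Measure (ℕ → X × Θ)) : Prop where
  prob : ∀ l z, IsProbabilityMeasure (law l z)
  meas : ∀ l, Measurable (law l)
  step : ∀ l z, law l z = (Pbar l z).bind fun z' => (law (l + 1) z').map (prepend z)

/-- The marginal compatibility `∫_{A×Θ} P̄(n;(x,θ);(dx',dθ')) = P_θ(x,A)`. -/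
def Compat (P : Θ → Kernel X X) (Pbar : ℕ → Kernel (X × Θ) (X × Θ)) : Prop :=
  ∀ (n : ℕ) (x : X) (θ : Θ) (A : Set X), MeasurableSet A →
    Pbar n (x, θ) (A ×ˢ (Set.univ : Set Θ)) = P θ x A

/-- Law of the chain with initial distribution `ξ1 ⊗ ξ2` (and `l = 0`). -/
def chainLaw (law : ℕ → X × Θ → Measure (ℕ → X × Θ)) (ξ1 : Measure X) (ξ2 : Measure Θ) :
    Measure (ℕ → X × Θ) :=
  (ξ1.prod ξ2).bind (law 0)

/-- Return time `τ_C = inf {n ≥ 1 : X_n ∈ C}` (equal to `⊤` if no such `n`). -/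
def hitTime (C : Set X) (ω : ℕ → X × Θ) : ℕ∞ :=
  ⨅ m : {m : ℕ // 1 ≤ m ∧ (ω m).1 ∈ C}, (m.1 : ℕ∞)

/-- Evaluation of `r : ℕ → ℝ` at an extended natural, with value `∞` at `∞`. -/
def rEval (r : ℕ → ℝ) : ℕ∞ → ℝ≥0∞ := fun t =>
  if t = ⊤ then ⊤ else ENNReal.ofReal (r t.toNat)

end AdaptiveMCMC

namespace AdaptiveMCMC

variable {X Θ : Type*} [MeasurableSpace X] [MeasurableSpace Θ]

/-- The resolvent function
`ĝ_a^{(l)}(x,θ) = Σ_{j≥0} (1−a)^{j+1} E^{(l)}_{x,θ}[f(X_j) − π(f)]`. -/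
def ghat (law : ℕ → X × Θ → Measure (ℕ → X × Θ)) (π : Measure X) (f : X → ℝ)
    (a : ℝ) (l : ℕ) (z : X × Θ) : ℝ :=
  ∑' j : ℕ, (1 - a) ^ (j + 1) * ∫ ω, (f ((ω j).1) - ∫ y, f y ∂π) ∂(law l z)

end AdaptiveMCMC

/-!
The identity is a telescoping of the geometric series `Σ_j (1-a)^j E[f̄(X_j)]`: by the Markov
property at time one, `E^{(l)}_{x,θ}[E^{(l+1)}_{Z_1}[f̄(X_j)]] = E^{(l)}_{x,θ}[f̄(X_{j+1})]`, so the
second term is this series with its zeroth term `f̄(x)` removed. The drift condition gives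
`E^{(l)}_{x,θ}[V(X_j)] ≤ V(x) + j b`, and since `|f̄| ≤ M V`, the coefficients grow at most linearly
in `j`; against the geometric weights this justifies every exchange of sum and integral.
-/

theorem MeasureTheory.Measure.integral_bind {α β E : Type*} [MeasurableSpace α]
    [MeasurableSpace β] [NormedAddCommGroup E] [NormedSpace ℝ E] {μ : Measure α}
    {ν : α → Measure β} (hν : Measurable ν) {g : β → E} (hg : Integrable g (μ.bind ν)) :
    ∫ y, g y ∂μ.bind ν = ∫ x, ∫ y, g y ∂ν x ∂μ := by
  let κ : Kernel α β := ⟨ν, hν⟩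
  change Integrable g (κ ∘ₘ μ) at hg
  change ∫ y, g y ∂(κ ∘ₘ μ) = _
  rw [Measure.comp_eq_comp_const_apply] at hg ⊢
  rw [Kernel.integral_comp hg, Kernel.const_apply]
  rfl

namespace AdaptiveMCMC

theorem measurable_prepend {α : Type*} [MeasurableSpace α] (z : α) :
    Measurable (prepend z : (ℕ → α) → ℕ → α) :=
  measurable_pi_lambda _ fun n => by
    cases n with
    | zero => exact measurable_const
    | succ n => exact measurable_pi_apply n

theorem summable_pow_mul_add_mul {r : ℝ} (hr0 : 0 ≤ r) (hr1 : r < 1) (A B : ℝ) :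
    Summable fun j : ℕ => r ^ j * (A + B * j) := by
  have hgeom := (summable_geometric_of_lt_one hr0 hr1).mul_left A
  have harith := (summable_pow_mul_geometric_of_norm_lt_one 1
    (by rwa [Real.norm_of_nonneg hr0])).mul_left B
  exact (hgeom.add harith).congr fun j => by ring

theorem inv_mul_tsum_pow_succ_mul {r : ℝ} (hr : r ≠ 0) {c : ℕ → ℝ}
    (hc : Summable fun j => r ^ (j + 1) * c j) :
    r⁻¹ * ∑' j, r ^ (j + 1) * c j = c 0 + ∑' j, r ^ (j + 1) * c (j + 1) := by
  have hshift : ∀ j, r⁻¹ * (r ^ (j + 1) * c j) = r ^ j * c j := fun j => by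
    field_simp
    ring
  rw [← tsum_mul_left, tsum_congr hshift, ((hc.mul_left r⁻¹).congr hshift).tsum_eq_zero_add]
  simp only [pow_zero, one_mul]

theorem abs_sub_le_mul_of_abs_le_mul_rpow {u m M v β : ℝ} (hv : 1 ≤ v) (hβ : β ≤ 1)
    (hu : |u| ≤ M * v ^ β) : |u - m| ≤ (M + |m|) * v := by
  have hM : 0 ≤ M :=
    nonneg_of_mul_nonneg_left ((abs_nonneg u).trans hu) (Real.rpow_pos_of_pos (by linarith) β)
  have hvβ : v ^ β ≤ v := by
    simpa using Real.rpow_le_rpow_of_exponent_le hv hβ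
  calc |u - m| ≤ |u| + |m| := abs_sub _ _
    _ ≤ M * v + |m| * v :=
      add_le_add (hu.trans (by gcongr)) (le_mul_of_one_le_right (abs_nonneg m) hv)
    _ = (M + |m|) * v := by ring

section

variable {X Θ : Type*} [MeasurableSpace X] [MeasurableSpace Θ]

theorem Compat.map_fst {P : Θ → Kernel X X} {Pbar : ℕ → Kernel (X × Θ) (X × Θ)}
    (hcompat : Compat P Pbar) (n : ℕ) (x : X) (θ : Θ) :
    (Pbar n (x, θ)).map Prod.fst = P θ x := by
  ext A hA
  rw [Measure.map_apply measurable_fst hA, ← hcompat n x θ A hA, Set.prod_univ]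

/-- A weak form of the drift condition `P_θ V ≤ V - c V^{1-α} + b 1_C`, for the joint chain. -/
def IsDriftBound (Pbar : ℕ → Kernel (X × Θ) (X × Θ)) (V : X × Θ → ℝ) (b : ℝ) : Prop :=
  ∀ n z, ∫⁻ z', ENNReal.ofReal (V z') ∂Pbar n z ≤ ENNReal.ofReal (V z) + ENNReal.ofReal b

theorem isDriftBound_of_drift {P : Θ → Kernel X X} {Pbar : ℕ → Kernel (X × Θ) (X × Θ)}
    (hcompat : Compat P Pbar) {V : X → ℝ} (hVmeas : Measurable V) (hV0 : ∀ x, 0 ≤ V x)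
    {C : Set X} {α b c : ℝ} (hb : 0 ≤ b) (hc : 0 ≤ c)
    (hdrift : ∀ (θ : Θ) (x : X),
        (∫⁻ y, ENNReal.ofReal (V y) ∂(P θ x)) ≤
          ENNReal.ofReal (V x - c * V x ^ (1 - α) + b * C.indicator (fun _ => (1 : ℝ)) x)) :
    IsDriftBound Pbar (fun z => V z.1) b := by
  rintro n ⟨x, θ⟩
  have hdecrease : V x - c * V x ^ (1 - α) + b * C.indicator (fun _ => (1 : ℝ)) x ≤ V x + b := by
    have hpen : 0 ≤ c * V x ^ (1 - α) := mul_nonneg hc (Real.rpow_nonneg (hV0 x) _)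
    have hind : b * C.indicator (fun _ => (1 : ℝ)) x ≤ b := by
      by_cases hx : x ∈ C <;> simp [hx, hb]
    linarith
  calc ∫⁻ z', ENNReal.ofReal (V z'.1) ∂Pbar n (x, θ)
      = ∫⁻ y, ENNReal.ofReal (V y) ∂P θ x := by
        rw [← hcompat.map_fst n x θ, lintegral_map hVmeas.ennreal_ofReal measurable_fst]
    _ ≤ ENNReal.ofReal (V x + b) := (hdrift θ x).trans (ENNReal.ofReal_le_ofReal hdecrease)
    _ ≤ ENNReal.ofReal (V x) + ENNReal.ofReal b := ENNReal.ofReal_add_le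

namespace IsAdaptiveLaw

variable {Pbar : ℕ → Kernel (X × Θ) (X × Θ)} {law : ℕ → X × Θ → Measure (ℕ → X × Θ)}

theorem measurable_map_prepend (hlaw : IsAdaptiveLaw Pbar law) (l : ℕ) (z : X × Θ) :
    Measurable fun z' => (law l z').map (prepend z) :=
  (Measure.measurable_map _ (measurable_prepend z)).comp (hlaw.meas l)

theorem measurable_integral_comp_eval (hlaw : IsAdaptiveLaw Pbar law) {g : X × Θ → ℝ}
    (hg : Measurable g) (l j : ℕ) :
    Measurable fun z => ∫ ω, g (ω j) ∂law l z := by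
  let κ : Kernel (X × Θ) (ℕ → X × Θ) := ⟨law l, hlaw.meas l⟩
  have : IsMarkovKernel κ := ⟨hlaw.prob l⟩
  exact (StronglyMeasurable.integral_kernel_prod_right' (κ := κ)
    (hg.comp ((measurable_pi_apply j).comp measurable_snd)).stronglyMeasurable).measurable

theorem lintegral_eq_lintegral_prepend (hlaw : IsAdaptiveLaw Pbar law)
    {G : (ℕ → X × Θ) → ℝ≥0∞} (hG : Measurable G) (l : ℕ) (z : X × Θ) :
    ∫⁻ ω, G ω ∂law l z = ∫⁻ z', ∫⁻ ω, G (prepend z ω) ∂law (l + 1) z' ∂Pbar l z := by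
  rw [hlaw.step, Measure.lintegral_bind (hlaw.measurable_map_prepend (l + 1) z).aemeasurable
    hG.aemeasurable]
  simp_rw [lintegral_map hG (measurable_prepend z)]

theorem integral_eq_integral_prepend (hlaw : IsAdaptiveLaw Pbar law) {G : (ℕ → X × Θ) → ℝ}
    (hGm : Measurable G) {l : ℕ} {z : X × Θ} (hG : Integrable G (law l z)) :
    ∫ ω, G ω ∂law l z = ∫ z', ∫ ω, G (prepend z ω) ∂law (l + 1) z' ∂Pbar l z := by
  rw [hlaw.step] at hG ⊢
  rw [Measure.integral_bind (hlaw.measurable_map_prepend (l + 1) z) hG]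
  simp_rw [integral_map (measurable_prepend z).aemeasurable hGm.aestronglyMeasurable]

section Markov

variable (hPbar : ∀ n, IsMarkovKernel (Pbar n)) (hlaw : IsAdaptiveLaw Pbar law)
include hPbar hlaw

theorem lintegral_comp_eval_zero {W : X × Θ → ℝ≥0∞} (hW : Measurable W) (l : ℕ) (z : X × Θ) :
    ∫⁻ ω, W (ω 0) ∂law l z = W z := by
  have := hlaw.prob
  rw [hlaw.lintegral_eq_lintegral_prepend (G := fun ω => W (ω 0)) (hW.comp (measurable_pi_apply 0))]
  simp [prepend]

theorem integral_comp_eval_zero {g : X × Θ → ℝ} (hg : Measurable g) (l : ℕ) (z : X × Θ) :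
    ∫ ω, g (ω 0) ∂law l z = g z := by
  have := hlaw.prob
  have hint : Integrable (fun ω => g (ω 0)) (law l z) :=
    ⟨(hg.comp (measurable_pi_apply 0)).aestronglyMeasurable, by
      rw [hasFiniteIntegral_iff_enorm,
        hlaw.lintegral_comp_eval_zero hPbar (W := fun w => ‖g w‖ₑ) hg.enorm]
      exact enorm_lt_top⟩
  rw [hlaw.integral_eq_integral_prepend (G := fun ω => g (ω 0))
    (hg.comp (measurable_pi_apply 0)) hint]
  simp [prepend]

theorem lintegral_comp_eval_le {W : X × Θ → ℝ≥0∞} (hW : Measurable W) {B : ℝ≥0∞}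
    (hstep : ∀ n z, ∫⁻ z', W z' ∂Pbar n z ≤ W z + B) (j : ℕ) :
    ∀ l z, ∫⁻ ω, W (ω j) ∂law l z ≤ W z + j * B := by
  induction j with
  | zero =>
    intro l z
    simp [hlaw.lintegral_comp_eval_zero hPbar hW]
  | succ j ih =>
    intro l z
    calc ∫⁻ ω, W (ω (j + 1)) ∂law l z
        = ∫⁻ z', ∫⁻ ω, W (ω j) ∂law (l + 1) z' ∂Pbar l z :=
          hlaw.lintegral_eq_lintegral_prepend (G := fun ω => W (ω (j + 1)))
            (hW.comp (measurable_pi_apply _)) l z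
      _ ≤ ∫⁻ z', (W z' + j * B) ∂Pbar l z := lintegral_mono fun z' => ih (l + 1) z'
      _ = ∫⁻ z', W z' ∂Pbar l z + j * B := by
          rw [lintegral_add_right _ measurable_const, lintegral_const, measure_univ, mul_one]
      _ ≤ W z + B + j * B := by gcongr; exact hstep l z
      _ = W z + (j + 1 : ℕ) * B := by push_cast; ring

theorem integral_integral_comp_eval_one {g : X × Θ → ℝ} (hg : Measurable g) {l j : ℕ}
    {z : X × Θ} (hinner : Integrable (fun ω => ∫ ω', g (ω' j) ∂law (l + 1) (ω 1)) (law l z))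
    (houter : Integrable (fun ω => g (ω (j + 1))) (law l z)) :
    ∫ ω, (∫ ω', g (ω' j) ∂law (l + 1) (ω 1)) ∂law l z = ∫ ω, g (ω (j + 1)) ∂law l z := by
  have hc := hlaw.measurable_integral_comp_eval hg (l + 1) j
  rw [hlaw.integral_eq_integral_prepend (G := fun ω => ∫ ω', g (ω' j) ∂law (l + 1) (ω 1))
      (hc.comp (measurable_pi_apply 1)) hinner,
    hlaw.integral_eq_integral_prepend (G := fun ω => g (ω (j + 1)))
      (hg.comp (measurable_pi_apply _)) houter]
  exact integral_congr_ae (ae_of_all _ fun z' => hlaw.integral_comp_eval_zero hPbar hc (l + 1) z')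

section Moments

variable {V : X × Θ → ℝ} {b M : ℝ} (hVm : Measurable V) (hV1 : ∀ w, 1 ≤ V w) (hb : 0 ≤ b)
  (hdrift : IsDriftBound Pbar V b) (hM : 0 ≤ M) {g : X × Θ → ℝ} (hg : ∀ w, ‖g w‖ ≤ M * V w)
include hVm hV1 hb hdrift hM hg

theorem lintegral_enorm_comp_eval_le (l j : ℕ) (z : X × Θ) :
    ∫⁻ ω, ‖g (ω j)‖ₑ ∂law l z ≤ ENNReal.ofReal (M * (V z + j * b)) := by
  have hW : Measurable fun w => ENNReal.ofReal (V w) := hVm.ennreal_ofReal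
  calc ∫⁻ ω, ‖g (ω j)‖ₑ ∂law l z
      ≤ ∫⁻ ω, ENNReal.ofReal M * ENNReal.ofReal (V (ω j)) ∂law l z := by
        refine lintegral_mono fun ω => ?_
        rw [← ENNReal.ofReal_mul hM, ← ofReal_norm]
        exact ENNReal.ofReal_le_ofReal (hg _)
    _ = ENNReal.ofReal M * ∫⁻ ω, ENNReal.ofReal (V (ω j)) ∂law l z :=
        lintegral_const_mul _ (hW.comp (measurable_pi_apply j))
    _ ≤ ENNReal.ofReal M * (ENNReal.ofReal (V z) + j * ENNReal.ofReal b) := by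
        gcongr
        exact hlaw.lintegral_comp_eval_le hPbar hW hdrift j l z
    _ = ENNReal.ofReal (M * (V z + j * b)) := by
        rw [← ENNReal.ofReal_natCast, ← ENNReal.ofReal_mul (Nat.cast_nonneg _),
          ← ENNReal.ofReal_add (by linarith [hV1 z]) (by positivity), ← ENNReal.ofReal_mul hM]

theorem integrable_comp_eval (hgm : Measurable g) (l j : ℕ) (z : X × Θ) :
    Integrable (fun ω => g (ω j)) (law l z) :=
  ⟨(hgm.comp (measurable_pi_apply j)).aestronglyMeasurable, by
    rw [hasFiniteIntegral_iff_enorm]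
    exact (hlaw.lintegral_enorm_comp_eval_le hPbar hVm hV1 hb hdrift hM hg l j z).trans_lt
      ENNReal.ofReal_lt_top⟩

theorem integral_norm_comp_eval_le (hgm : Measurable g) (l j : ℕ) (z : X × Θ) :
    ∫ ω, ‖g (ω j)‖ ∂law l z ≤ M * (V z + j * b) := by
  have hmeas : AEStronglyMeasurable (fun ω => g (ω j)) (law l z) :=
    (hgm.comp (measurable_pi_apply j)).aestronglyMeasurable
  rw [integral_norm_eq_lintegral_enorm hmeas]
  have hbound : 0 ≤ V z + j * b := by linarith [hV1 z, (by positivity : 0 ≤ j * b)]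
  exact ENNReal.toReal_le_of_le_ofReal (mul_nonneg hM hbound)
    (hlaw.lintegral_enorm_comp_eval_le hPbar hVm hV1 hb hdrift hM hg l j z)

theorem summable_abs_pow_succ_mul_integral_comp_eval (hgm : Measurable g) {r : ℝ} (hr0 : 0 ≤ r)
    (hr1 : r < 1) (l : ℕ) (z : X × Θ) :
    Summable fun j : ℕ => |r ^ (j + 1) * ∫ ω, g (ω j) ∂law l z| := by
  refine Summable.of_nonneg_of_le (fun j => abs_nonneg _) (fun j => ?_)
    ((summable_pow_mul_add_mul hr0 hr1 (r * M * V z) (r * M * b)).congr fun j => by ring :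
      Summable fun j : ℕ => r ^ (j + 1) * (M * (V z + j * b)))
  rw [abs_mul, abs_of_nonneg (by positivity)]
  gcongr
  exact (norm_integral_le_integral_norm _).trans
    (hlaw.integral_norm_comp_eval_le hPbar hVm hV1 hb hdrift hM hg hgm l j z)

theorem integral_tsum_comp_eval_one (hgm : Measurable g) {r : ℝ} (hr0 : 0 ≤ r) (hr1 : r < 1)
    (l : ℕ) (z : X × Θ) :
    ∫ ω, (∑' j : ℕ, r ^ (j + 1) * ∫ ω', g (ω' j) ∂law (l + 1) (ω 1)) ∂law l z =
      ∑' j : ℕ, r ^ (j + 1) * ∫ ω, g (ω (j + 1)) ∂law l z := by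
  set c : ℕ → X × Θ → ℝ := fun j z' => ∫ ω', g (ω' j) ∂law (l + 1) z'
  have hcm : ∀ j, Measurable (c j) := hlaw.measurable_integral_comp_eval hgm (l + 1)
  have hMj : ∀ j : ℕ, 0 ≤ M * (1 + j * b) := fun j => by positivity
  -- `V ≥ 1` absorbs the additive term of the moment bound into the multiplicative constant.
  have hcb : ∀ (j : ℕ) z', ‖c j z'‖ ≤ M * (1 + j * b) * V z' := fun j z' => by
    have hmoment := (norm_integral_le_integral_norm _).trans
      (hlaw.integral_norm_comp_eval_le hPbar hVm hV1 hb hdrift hM hg hgm (l + 1) j z')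
    have hjb : 0 ≤ M * (j * b) := by positivity
    nlinarith [hV1 z']
  have hcint : ∀ j, Integrable (fun ω => c j (ω 1)) (law l z) := fun j =>
    hlaw.integrable_comp_eval hPbar hVm hV1 hb hdrift (hMj j) (hcb j) (hcm j) l 1 z
  have hnorm : ∀ j : ℕ, ∫ ω, ‖r ^ (j + 1) * c j (ω 1)‖ ∂law l z ≤
      r ^ (j + 1) * (M * (1 + j * b) * (V z + b)) := fun j => by
    simp_rw [norm_mul, norm_pow, Real.norm_of_nonneg hr0]
    rw [integral_const_mul]
    gcongr
    simpa using
      hlaw.integral_norm_comp_eval_le hPbar hVm hV1 hb hdrift (hMj j) (hcb j) (hcm j) l 1 z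
  have hsum : Summable fun j : ℕ => ∫ ω, ‖r ^ (j + 1) * c j (ω 1)‖ ∂law l z :=
    Summable.of_nonneg_of_le (fun j => integral_nonneg fun _ => norm_nonneg _) hnorm
      ((summable_pow_mul_add_mul hr0 hr1 (r * M * (V z + b)) (r * M * b * (V z + b))).congr
        fun j => by ring)
  rw [← integral_tsum_of_summable_integral_norm (fun j => (hcint j).const_mul _) hsum]
  refine tsum_congr fun j => ?_
  rw [integral_const_mul, hlaw.integral_integral_comp_eval_one hPbar hgm (hcint j)
    (hlaw.integrable_comp_eval hPbar hVm hV1 hb hdrift hM hg hgm l (j + 1) z)]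

end Moments

end Markov

end IsAdaptiveLaw

end

theorem resolvent_identity_general
    {X Θ : Type*} [MeasurableSpace X] [MeasurableSpace Θ]
    (P : Θ → Kernel X X)
    (Pbar : ℕ → Kernel (X × Θ) (X × Θ)) (hPbarm : ∀ n, IsMarkovKernel (Pbar n))
    (hcompat : Compat P Pbar)
    (law : ℕ → X × Θ → Measure (ℕ → X × Θ)) (hlaw : IsAdaptiveLaw Pbar law)
    (V : X → ℝ) (hVmeas : Measurable V) (hV1 : ∀ x, 1 ≤ V x)
    (C : Set X)
    (α b c : ℝ) (hα0 : 0 < α) (hb : 0 < b) (hc : 0 < c)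
    (hdrift : ∀ (θ : Θ) (x : X),
        (∫⁻ y, ENNReal.ofReal (V y) ∂(P θ x)) ≤
          ENNReal.ofReal (V x - c * V x ^ (1 - α) + b * C.indicator (fun _ => (1 : ℝ)) x))
    (π : Measure X)
    (β : ℝ) (hβ : β ≤ 1 - α)
    (f : X → ℝ) (hfmeas : Measurable f)
    (Mf : ℝ) (hfb : ∀ x, |f x| ≤ Mf * V x ^ β)
    (a : ℝ) (ha0 : 0 < a) (ha1 : a < 1) (l : ℕ) (x : X) (θ : Θ) :
    (Summable fun j : ℕ =>
        |(1 - a) ^ (j + 1) * ∫ ω, (f ((ω j).1) - ∫ y, f y ∂π) ∂(law l (x, θ))|) ∧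
    f x - (∫ y, f y ∂π) =
      (1 - a)⁻¹ * ghat law π f a l (x, θ) -
        ∫ ω, ghat law π f a (l + 1) (ω 1) ∂(law l (x, θ)) := by
  set m := ∫ y, f y ∂π
  have hVm : Measurable fun z : X × Θ => V z.1 := hVmeas.comp measurable_fst
  have hV1' : ∀ z : X × Θ, 1 ≤ V z.1 := fun z => hV1 z.1
  have hdb : IsDriftBound Pbar (fun z => V z.1) b :=
    isDriftBound_of_drift hcompat hVmeas (fun x => by linarith [hV1 x]) hb.le hc.le hdrift
  have hgm : Measurable fun z : X × Θ => f z.1 - m := (hfmeas.comp measurable_fst).sub_const m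
  have hg : ∀ z : X × Θ, ‖f z.1 - m‖ ≤ (Mf + |m|) * V z.1 := fun z =>
    abs_sub_le_mul_of_abs_le_mul_rpow (hV1 z.1) (by linarith) (hfb z.1)
  have hM : 0 ≤ Mf + |m| :=
    nonneg_of_mul_nonneg_left ((norm_nonneg _).trans (hg (x, θ))) (by linarith [hV1 x])
  have hr0 : 0 ≤ 1 - a := by linarith
  have hr1 : 1 - a < 1 := by linarith
  have hsum := hlaw.summable_abs_pow_succ_mul_integral_comp_eval hPbarm hVm hV1' hb.le hdb hM hg
    hgm hr0 hr1 l (x, θ)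
  refine ⟨hsum, ?_⟩
  simp only [ghat]
  rw [hlaw.integral_tsum_comp_eval_one hPbarm hVm hV1' hb.le hdb hM hg hgm hr0 hr1,
    inv_mul_tsum_pow_succ_mul (by linarith) hsum.of_abs,
    hlaw.integral_comp_eval_zero hPbarm hgm]
  ring

/-- Proposition 4.8 (generalized Poisson equation for the resolvent). -/
theorem resolvent_identity
    {X Θ : Type*} [MeasurableSpace X] [MeasurableSpace Θ]
    (P : Θ → Kernel X X) (hPm : ∀ θ, IsMarkovKernel (P θ))
    (hPθmeas : ∀ (x : X) (A : Set X), MeasurableSet A → Measurable fun θ => P θ x A)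
    (Pbar : ℕ → Kernel (X × Θ) (X × Θ)) (hPbarm : ∀ n, IsMarkovKernel (Pbar n))
    (hcompat : Compat P Pbar)
    (law : ℕ → X × Θ → Measure (ℕ → X × Θ)) (hlaw : IsAdaptiveLaw Pbar law)
    (V : X → ℝ) (hVmeas : Measurable V) (hV1 : ∀ x, 1 ≤ V x)
    (C : Set X) (hCmeas : MeasurableSet C)
    (α b c : ℝ) (hα0 : 0 < α) (hα1 : α ≤ 1) (hb : 0 < b) (hc : 0 < c)
    (hdrift : ∀ (θ : Θ) (x : X),
        (∫⁻ y, ENNReal.ofReal (V y) ∂(P θ x)) ≤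
          ENNReal.ofReal (V x - c * V x ^ (1 - α) + b * C.indicator (fun _ => (1 : ℝ)) x))
    (π : Measure X) (hπ : IsProbabilityMeasure π)
    (β : ℝ) (hβ0 : 0 ≤ β) (hβ : β ≤ 1 - α)
    (f : X → ℝ) (hfmeas : Measurable f) (hfint : Integrable f π)
    (Mf : ℝ) (hfb : ∀ x, |f x| ≤ Mf * V x ^ β)
    (a : ℝ) (ha0 : 0 < a) (ha1 : a < 1) (l : ℕ) (x : X) (θ : Θ) :
    (Summable fun j : ℕ =>
        |(1 - a) ^ (j + 1) * ∫ ω, (f ((ω j).1) - ∫ y, f y ∂π) ∂(law l (x, θ))|) ∧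
    f x - (∫ y, f y ∂π) =
      (1 - a)⁻¹ * ghat law π f a l (x, θ) -
        ∫ ω, ghat law π f a (l + 1) (ω 1) ∂(law l (x, θ)) :=
  resolvent_identity_general P Pbar hPbarm hcompat law hlaw V hVmeas hV1 C α b c hα0 hb hc hdrift π
    β hβ f hfmeas Mf hfb a ha0 ha1 l x θ

end AdaptiveMCMC
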